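/- Let G be a polynomial with integer coefficients and zero constant term whose linear coefficient a₁ and odd-coefficient sum s₁ are both even. Then i^(G(0)) + i^(G(-1)) + i^(G(-2)) + i^(G(-3)) = 2 + 2i^(G(1)) and i^(G(0)) − i^(G(-1)) + i^(G(-2)) − i^(G(-3)) = 2 − 2i^(G(1)). -/
import Mathlib

lemma I_zpow_congr {a b : ℤ} (h : (4:ℤ) ∣ a - b) : Complex.I ^ a = Complex.I ^ b := by
  obtain ⟨k, hk⟩ := h
  have ha : a = b + 4 * k := by linarith
  have h4 : Complex.I ^ (4:ℤ) = 1 := by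
    rw [show (4:ℤ) = ((4:ℕ):ℤ) from rfl, zpow_natCast]
    simp [pow_succ, Complex.I_mul_I]
  rw [ha, zpow_add₀ Complex.I_ne_zero, zpow_mul, h4, one_zpow, mul_one]

theorem sum_I_powers (G : Polynomial ℤ) (h0 : G.coeff 0 = 0)
    (s1 : ℤ)
    (hs1 : s1 = ∑ j ∈ Finset.range (G.natDegree + 1), if Odd j then G.coeff j else 0)
    (ha1 : Even (G.coeff 1)) (hsodd : Even s1) :
    (Complex.I ^ (G.eval 0) + Complex.I ^ (G.eval (-1)) +
        Complex.I ^ (G.eval (-2)) + Complex.I ^ (G.eval (-3)) =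
      2 + 2 * Complex.I ^ (G.eval 1)) ∧
    (Complex.I ^ (G.eval 0) - Complex.I ^ (G.eval (-1)) +
        Complex.I ^ (G.eval (-2)) - Complex.I ^ (G.eval (-3)) =
      2 - 2 * Complex.I ^ (G.eval 1)) := by
  have h00 : G.eval 0 = 0 := by
    simp [← Polynomial.coeff_zero_eq_eval_zero, h0]
  -- G(-3) ≡ G(1) mod 4
  have hd3 : (4:ℤ) ∣ G.eval (-3) - G.eval 1 := by
    have h := Polynomial.sub_dvd_eval_sub (-3) 1 G
    norm_num at h
    exact h
  -- G(1) - G(-1) = 2*s1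
  have hd1 : (4:ℤ) ∣ G.eval (-1) - G.eval 1 := by
    have he : G.eval 1 - G.eval (-1) = 2 * s1 := by
      rw [Polynomial.eval_eq_sum_range, Polynomial.eval_eq_sum_range, hs1,
        ← Finset.sum_sub_distrib, Finset.mul_sum]
      refine Finset.sum_congr rfl fun j _ => ?_
      rcases Nat.even_or_odd j with hj | hj
      · simp [hj.neg_one_pow, Nat.not_odd_iff_even.mpr hj]
      · simp [hj.neg_one_pow, hj]
        ring
    obtain ⟨t, ht⟩ := hsodd
    exact ⟨-t, by linarith⟩
  -- G(-2) ≡ G(2) ≡ 0 mod 4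
  have hd2 : (4:ℤ) ∣ G.eval (-2) := by
    have h1 : (4:ℤ) ∣ G.eval (-2) - G.eval 2 := by
      have h := Polynomial.sub_dvd_eval_sub (-2) 2 G
      norm_num at h
      exact h
    have h2 : (4:ℤ) ∣ G.eval 2 := by
      rw [Polynomial.eval_eq_sum_range]
      refine Finset.dvd_sum fun j _ => ?_
      match j with
      | 0 => simp [h0]
      | 1 => obtain ⟨m, hm⟩ := ha1; exact ⟨m, by rw [hm]; ring⟩
      | (n+2) => exact Dvd.dvd.mul_left ⟨2^n, by ring⟩ _
    omega
  have e2 : Complex.I ^ (G.eval (-2)) = 1 := by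
    have := I_zpow_congr (a := G.eval (-2)) (b := 0) (by simpa using hd2)
    simpa using this
  have e0 : Complex.I ^ (G.eval 0) = 1 := by simp [h00]
  have e1 : Complex.I ^ (G.eval (-1)) = Complex.I ^ (G.eval 1) := I_zpow_congr hd1
  have e3 : Complex.I ^ (G.eval (-3)) = Complex.I ^ (G.eval 1) := I_zpow_congr hd3
  rw [e0, e1, e2, e3]
  constructor <;> ring
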